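/- Let I be a multi inversion set. Its transitive closure tc(I), defined by card_{tc(I)}(c,a) = max over transitivity paths c = b_1 > b_2 > ... > b_k = a of card_I(b_1,b_2), is transitive; moreover, for any transitive multi inversion set J containing I, tc(I) ⊆ J. -/

import Mathlib

/-- Planar rooted trees: leaves are unlabeled; internal nodes carry a natural
number label and an ordered list of children. -/
inductive STree : Type where
  | leaf : STree
  | node : ℕ → List STree → STree

namespace STree

mutual
  /-- `x` occurs as the label of an internal node of the tree. -/
  def mem (x : ℕ) : STree → Bool
    | .leaf => false
    | .node a cs => x == a || memL x cs
  def memL (x : ℕ) : List STree → Bool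
    | [] => false
    | t :: ts => mem x t || memL x ts
end

mutual
  /-- The list of internal node labels, in preorder. -/
  def labels : STree → List ℕ
    | .leaf => []
    | .node a cs => a :: labelsL cs
  def labelsL : List STree → List ℕ
    | [] => []
    | t :: ts => labels t ++ labelsL ts
end

mutual
  /-- Local well-formedness for the signature `s` : an internal node labeled `a`
  has `s a + 1` children, and all labels below it are smaller than `a`. -/
  def wf (s : ℕ → ℕ) : STree → Prop
    | .leaf => True
    | .node a cs => cs.length = s a + 1 ∧ (∀ b ∈ labelsL cs, b < a) ∧ wfL s cs
  def wfL (s : ℕ → ℕ) : List STree → Prop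
    | [] => True
    | t :: ts => wf s t ∧ wfL s ts
end

/-- `T` is an `s`-decreasing tree: its internal nodes are labeled bijectively by
`1, …, n`, node `i` has `s i + 1` ordered children, and all descendants of a node
have smaller labels. -/
def IsSDecreasingTree (n : ℕ) (s : ℕ → ℕ) (T : STree) : Prop :=
  wf s T ∧ (labels T).Perm (List.range' 1 n)

/-- Index of the first tree of the list containing the label `x`. -/
def idxOf (x : ℕ) : List STree → ℕ
  | [] => 0
  | t :: ts => if mem x t then 0 else idxOf x ts + 1

mutual
  /-- The cardinality `card_T(y,x)` of the pair `(y,x)` in the tree: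
  `0` if `x` is (weakly) left of `y`, `i` if `x` lies in the `i`-th child
  subtree of `y`, and `s y` if `x` is right of `y`. -/
  def card (s : ℕ → ℕ) (y x : ℕ) : STree → ℕ
    | .leaf => 0
    | .node a cs => if a = y then idxOf x cs else cardL s y x cs
  def cardL (s : ℕ → ℕ) (y x : ℕ) : List STree → ℕ
    | [] => 0
    | t :: ts =>
      if mem y t then
        (if mem x t then card s y x t else if memL x ts then s y else 0)
      else (if mem x t then 0 else cardL s y x ts)
end

/-- The tree-inversion multiset of `T`, as a multiplicity function on pairs
`(y,x)` with `1 ≤ x < y ≤ n`. -/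
def treeInv (n : ℕ) (s : ℕ → ℕ) (T : STree) : ℕ → ℕ → ℕ := fun y x =>
  if 1 ≤ x ∧ x < y ∧ y ≤ n then card s y x T else 0

/-- A multi inversion set on `1, …, n` bounded by the weak composition `s`. -/
def IsMultiInvSet (n : ℕ) (s : ℕ → ℕ) (I : ℕ → ℕ → ℕ) : Prop :=
  (∀ y x, I y x ≤ s y) ∧ ∀ y x, ¬(1 ≤ x ∧ x < y ∧ y ≤ n) → I y x = 0

/-- Transitivity: for `a < b < c`, `card(c,b) = i` implies `card(b,a) = 0` or
`card(c,a) ≥ i`. -/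
def InvTransitive (I : ℕ → ℕ → ℕ) : Prop :=
  ∀ a b c : ℕ, a < b → b < c → I b a = 0 ∨ I c b ≤ I c a

/-- Planarity: for `a < b < c`, `card(c,a) = i` implies `card(b,a) = s b` or
`card(c,b) ≥ i`. -/
def InvPlanar (s : ℕ → ℕ) (I : ℕ → ℕ → ℕ) : Prop :=
  ∀ a b c : ℕ, a < b → b < c → I b a = s b ∨ I c a ≤ I c b

/-- An `s`-tree-inversion set: a bounded multi inversion set that is transitive
and planar. -/
def IsTreeInvSet (n : ℕ) (s : ℕ → ℕ) (I : ℕ → ℕ → ℕ) : Prop :=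
  IsMultiInvSet n s I ∧ InvTransitive I ∧ InvPlanar s I

/-- Inclusion of multi inversion sets: pointwise comparison of multiplicities. -/
def invLE (I J : ℕ → ℕ → ℕ) : Prop := ∀ y x, I y x ≤ J y x

/-- The `s`-weak order: inclusion of tree-inversion multisets. -/
def sWeakLE (n : ℕ) (s : ℕ → ℕ) (T R : STree) : Prop :=
  invLE (treeInv n s T) (treeInv n s R)

/-- Union of multi inversion sets: pointwise maximum. -/
def invUnion (I J : ℕ → ℕ → ℕ) : ℕ → ℕ → ℕ := fun y x => max (I y x) (J y x)

/-- Transitive closure: `tc I (c,a)` is the maximal value of `I (b₁, b₂)` over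
all transitivity paths `c = b₁ > b₂ > … > b_k = a` (consecutive entries have
positive multiplicity). -/
noncomputable def tc (I : ℕ → ℕ → ℕ) : ℕ → ℕ → ℕ := fun c a =>
  sSup {v | ∃ (b : ℕ) (l : List ℕ),
    List.Chain (fun u w => w < u ∧ 0 < I u w) c (b :: l) ∧
    (b :: l).getLast (List.cons_ne_nil b l) = a ∧ v = I c b}

/-- Adding the inversion `(c,a)`: increase its multiplicity by one. -/
def addInv (I : ℕ → ℕ → ℕ) (c a : ℕ) : ℕ → ℕ → ℕ := fun y x =>
  if y = c ∧ x = a then I y x + 1 else I y x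

mutual
  /-- `a` is a (proper) descendant of the node labeled `c`. -/
  def descIn (c a : ℕ) : STree → Bool
    | .leaf => false
    | .node b cs => (b == c && memL a cs) || descInL c a cs
  def descInL (c a : ℕ) : List STree → Bool
    | [] => false
    | t :: ts => descIn c a t || descInL c a ts
end

mutual
  /-- `a` belongs to the rightmost child subtree of the node labeled `c`. -/
  def inRight (c a : ℕ) : STree → Bool
    | .leaf => false
    | .node b cs =>
      (b == c && (match cs.getLast? with
        | some t => mem a t
        | none => false)) || inRightL c a cs
  def inRightL (c a : ℕ) : List STree → Bool
    | [] => false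
    | t :: ts => inRight c a t || inRightL c a ts
end

mutual
  /-- `a` belongs to the leftmost child subtree of the node labeled `c`. -/
  def inLeft (c a : ℕ) : STree → Bool
    | .leaf => false
    | .node b cs =>
      (b == c && (match cs.head? with
        | some t => mem a t
        | none => false)) || inLeftL c a cs
  def inLeftL (c a : ℕ) : List STree → Bool
    | [] => false
    | t :: ts => inLeft c a t || inLeftL c a ts
end

mutual
  /-- The rightmost child subtree of the node labeled `a` is empty (a leaf). -/
  def rightEmpty (a : ℕ) : STree → Bool
    | .leaf => false
    | .node b cs =>
      (b == a && (match cs.getLast? with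
        | some .leaf => true
        | _ => false)) || rightEmptyL a cs
  def rightEmptyL (a : ℕ) : List STree → Bool
    | [] => false
    | t :: ts => rightEmpty a t || rightEmptyL a ts
end

/-- `(a,c)` is a tree-ascent of `T`: `a` is a descendant of `c`, not in the
rightmost subtree of `c`; `a` lies in the rightmost subtree of any `b` with
`a < b < c` having `a` as a descendant; and if `s a > 0` the rightmost
(strict right) subtree of `a` is empty. -/
def IsTreeAscent (s : ℕ → ℕ) (T : STree) (a c : ℕ) : Prop :=
  a < c ∧ descIn c a T = true ∧ inRight c a T = false ∧
  (∀ b : ℕ, a < b → b < c → descIn b a T = true → inRight b a T = true) ∧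
  (0 < s a → rightEmpty a T = true)

/-- `a` is the root label of the tree. -/
def hasRoot (a : ℕ) : STree → Bool
  | .leaf => false
  | .node b _ => a == b

mutual
  /-- `a` is a direct child of the node `c`, but not its rightmost child. -/
  def nonRightChild (c a : ℕ) : STree → Bool
    | .leaf => false
    | .node b cs => (b == c && cs.dropLast.any (hasRoot a)) || nonRightChildL c a cs
  def nonRightChildL (c a : ℕ) : List STree → Bool
    | [] => false
    | t :: ts => nonRightChild c a t || nonRightChildL c a ts
end

/-- `(a,c)` is a Tamari-ascent of `T`: `a` is a non-right child of `c`. -/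
def IsTamariAscent (T : STree) (a c : ℕ) : Prop :=
  a < c ∧ nonRightChild c a T = true

mutual
  /-- Horizontal mirror image of a tree: the order of children is reversed at
  every internal node. -/
  def mirror : STree → STree
    | .leaf => .leaf
    | .node a cs => .node a (mirrorL cs)
  def mirrorL : List STree → List STree
    | [] => []
    | t :: ts => mirrorL ts ++ [mirror t]
end

/-- `T` is an `s`-Tamari tree: `card(c,a) ≤ card(c,b)` for all `a < b < c`. -/
def TamariProp (n : ℕ) (s : ℕ → ℕ) (T : STree) : Prop :=
  ∀ a b c : ℕ, a < b → b < c → treeInv n s T c a ≤ treeInv n s T c b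

/-- `T` is an `s`-maximal-Tamari tree: `card(b,a) = s b` implies
`card(c,a) = s c` for all `c > b`. -/
def MaxTamariProp (n : ℕ) (s : ℕ → ℕ) (T : STree) : Prop :=
  ∀ a b c : ℕ, 1 ≤ a → a < b → b < c → c ≤ n →
    treeInv n s T b a = s b → treeInv n s T c a = s c

/-- The projection `π↓` on inversion sets:
`card_Q(c,a) = min { card_T(c,b) : a ≤ b < c }`. -/
noncomputable def pidownInv (n : ℕ) (s : ℕ → ℕ) (T : STree) : ℕ → ℕ → ℕ :=
  fun c a => sInf {v | ∃ b : ℕ, a ≤ b ∧ b < c ∧ v = treeInv n s T c b}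

open scoped Classical in
/-- The projection `π↑` on inversion sets: `card_R(c,a) = s c` if there is
`a < b < c` with `card_T(b,a) = s b`, and `card_R(c,a) = card_T(c,a)` otherwise. -/
noncomputable def piupInv (n : ℕ) (s : ℕ → ℕ) (T : STree) : ℕ → ℕ → ℕ :=
  fun c a =>
    if 1 ≤ a ∧ a < c ∧ c ≤ n then
      if ∃ b : ℕ, a < b ∧ b < c ∧ treeInv n s T b a = s b then s c
      else treeInv n s T c a
    else 0

end STree

/-
A transitivity path for `I` is a chain for the relation `tcStep I u w : w < u ∧ 0 < I u w`, so
`tc I c a` is the largest `I c b` over first steps `c → b` followed by a path `b →* a`.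
Prefixing a path `c → ⋯ → b` to a path `b → ⋯ → a` keeps its first step, which gives transitivity
of `tc I`. Conversely, along a path `b = b₁ → b₂ → ⋯ → a` for `J ≥ I` every `J (bᵢ, bᵢ₊₁)` is
positive, so transitivity of `J` yields `J (c, b) ≤ J (c, b₂) ≤ ⋯ ≤ J (c, a)` for every `c > b`.
-/

namespace STree

open Relation

def tcStep (I : ℕ → ℕ → ℕ) (u w : ℕ) : Prop := w < u ∧ 0 < I u w

theorem tcStep_mono {I J : ℕ → ℕ → ℕ} (hIJ : ∀ y x, I y x ≤ J y x) : tcStep I ≤ tcStep J :=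
  fun u w h => ⟨h.1, h.2.trans_le (hIJ u w)⟩

theorem tc_eq_sSup_image (I : ℕ → ℕ → ℕ) (c a : ℕ) :
    tc I c a = sSup (I c '' {b | tcStep I c b ∧ ReflTransGen (tcStep I) b a}) := by
  refine congrArg sSup (Set.ext fun v => ⟨?_, ?_⟩)
  · rintro ⟨b, l, hpath, hlast, rfl⟩
    obtain ⟨hcb, hpath⟩ := List.isChain_cons_cons.mp hpath
    exact ⟨b, ⟨hcb, List.relationReflTransGen_of_exists_isChain_cons l hpath hlast⟩, rfl⟩
  · rintro ⟨b, ⟨hcb, hba⟩, rfl⟩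
    obtain ⟨l, hpath, hlast⟩ := List.exists_isChain_cons_of_relationReflTransGen hba
    exact ⟨b, l, hpath.cons_cons hcb, hlast, rfl⟩

theorem transGen_tcStep_of_tc_ne_zero {I : ℕ → ℕ → ℕ} {b a : ℕ} (h : tc I b a ≠ 0) :
    TransGen (tcStep I) b a := by
  rw [tc_eq_sSup_image] at h
  rcases (I b '' {b' | tcStep I b b' ∧ ReflTransGen (tcStep I) b' a}).eq_empty_or_nonempty
    with hempty | ⟨_, b', hpath, -⟩
  · exact absurd (by rw [hempty, csSup_empty]; rfl) h
  · exact TransGen.head'_iff.mpr ⟨b', hpath⟩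

theorem tc_le_tc_of_reflTransGen {I : ℕ → ℕ → ℕ} {b a : ℕ}
    (hba : ReflTransGen (tcStep I) b a) (c : ℕ) : tc I c b ≤ tc I c a := by
  rw [tc_eq_sSup_image, tc_eq_sSup_image]
  have hbdd : BddAbove (I c '' {d | tcStep I c d ∧ ReflTransGen (tcStep I) d a}) :=
    ((Set.finite_Iio c).subset fun _ hd => hd.1.1).image _ |>.bddAbove
  exact csSup_le_csSup' hbdd (Set.image_mono fun d hd => ⟨hd.1, hd.2.trans hba⟩)

theorem invTransitive_tc (I : ℕ → ℕ → ℕ) : InvTransitive (tc I) := fun _ _ c _ _ =>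
  or_iff_not_imp_left.mpr fun hba =>
    tc_le_tc_of_reflTransGen (transGen_tcStep_of_tc_ne_zero hba).to_reflTransGen c

theorem InvTransitive.le_of_reflTransGen {J : ℕ → ℕ → ℕ} (hJ : InvTransitive J) {b a c : ℕ}
    (hba : ReflTransGen (tcStep J) b a) (hbc : b < c) : J c b ≤ J c a := by
  induction hba using ReflTransGen.head_induction_on with
  | refl => exact le_rfl
  | head hstep _ ih =>
    exact ((hJ _ _ c hstep.1 hbc).resolve_left hstep.2.ne').trans (ih (hstep.1.trans hbc))

theorem InvTransitive.tc_le {I J : ℕ → ℕ → ℕ} (hJ : InvTransitive J)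
    (hIJ : ∀ y x, I y x ≤ J y x) (c a : ℕ) : tc I c a ≤ J c a := by
  rw [tc_eq_sSup_image]
  refine csSup_le' ?_
  rintro _ ⟨b, ⟨hcb, hba⟩, rfl⟩
  exact (hIJ c b).trans (hJ.le_of_reflTransGen (ReflTransGen.mono (tcStep_mono hIJ) _ _ hba) hcb.1)

end STree

open STree in
/-- The transitive closure `tc I` of a multi inversion set `I` is transitive,
and it is contained in any transitive multi inversion set containing `I`. -/
theorem tc_transitive_and_minimal (I : ℕ → ℕ → ℕ) :
    InvTransitive (tc I) ∧
    ∀ J : ℕ → ℕ → ℕ, InvTransitive J → (∀ y x, I y x ≤ J y x) →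
      ∀ y x, tc I y x ≤ J y x :=
  ⟨invTransitive_tc I, fun _ hJ hIJ => hJ.tc_le hIJ⟩
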